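/- arXiv:1910.05379 — 4 statements merged into one kernel-verified Lean document; each statement's English description precedes it below -/
import Mathlib

section
/- Let K := {(ℓ,i) : ℓ ∈ ℕ₀^d, ‖ℓ‖₁ ≤ n, i ∈ I_ℓ} be the level-index set of the regular sparse grid of level n and dimensionality d, and assume the functions {φ_{ℓ,i} : (ℓ,i) ∈ K} are linearly independent. Then span{φ^{hft}_{ℓ',i'} : (ℓ',i') ∈ K} = span{φ_{ℓ',i'} : (ℓ',i') ∈ K} as subspaces of the real vector space of functions [0,1]^d → ℝ. (Proposition 4.15, spanned sparse grid space for the hierarchical fundamental transformation.) -/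
/-- The hierarchical index set: `I_0 = {0,1}`, and for `ℓ ≥ 1` the odd indices in
`{1, …, 2^ℓ − 1}`. -/
def hierIndex (lam : ℕ) : Finset ℕ :=
  if lam = 0 then ({0, 1} : Finset ℕ)
  else (Finset.range (2 ^ lam)).filter fun j => Odd j

/-- The grid point `x_{lam,j} = j / 2^lam ∈ [0,1]` (junk value for `j > 2^lam`). -/
noncomputable def gridPt (lam j : ℕ) : Set.Icc (0:ℝ) 1 :=
  if h : j ≤ 2 ^ lam then
    ⟨(j : ℝ) / 2 ^ lam, Set.mem_Icc.mpr
      ⟨by positivity, by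
        rw [div_le_one (by positivity)]
        exact_mod_cast h⟩⟩
  else ⟨0, Set.mem_Icc.mpr ⟨le_rfl, zero_le_one⟩⟩

/-- The level-index pairs of the regular sparse grid of level `n` and dimensionality `d`. -/
abbrev SGPairs (d n : ℕ) : Type :=
  {pr : (Fin d → ℕ) × (Fin d → ℕ) //
    (∑ t, pr.1 t) ≤ n ∧ ∀ t, pr.2 t ∈ hierIndex (pr.1 t)}

open Submodule
-- workhorse: product of span members lies in span of products
lemma prod_mem_span' {X : Type*} {d : ℕ} (g : Fin d → X → ℝ) (s : Fin d → Set (X → ℝ))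
    (hg : ∀ t, g t ∈ span ℝ (s t)) :
    (fun x : Fin d → X => ∏ t, g t (x t)) ∈
      span ℝ {F : (Fin d → X) → ℝ |
        ∃ f : Fin d → X → ℝ, (∀ t, f t ∈ s t) ∧ F = fun x => ∏ t, f t (x t)} := by
  choose c hsupp hsum using fun t => mem_span_set.mp (hg t)
  have key : (fun x : Fin d → X => ∏ t, g t (x t)) =
      ∑ p ∈ Fintype.piFinset (fun t => (c t).support),
        (∏ t, c t (p t)) • fun x : Fin d → X => ∏ t, (p t) (x t) := by
    funext x
    have h1 : ∀ t, g t (x t) = ∑ f ∈ (c t).support, c t f * f (x t) := by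
      intro t
      rw [← hsum t, Finsupp.sum]
      simp [Finset.sum_apply]
    calc ∏ t, g t (x t) = ∏ t, ∑ f ∈ (c t).support, c t f * f (x t) := by
          exact Finset.prod_congr rfl fun t _ => h1 t
      _ = ∑ p ∈ Fintype.piFinset (fun t => (c t).support), ∏ t, (c t (p t) * (p t) (x t)) :=
          Finset.prod_univ_sum _ _
      _ = _ := by
          rw [Finset.sum_apply]
          exact Finset.sum_congr rfl fun p _ => by
            simp [Finset.prod_mul_distrib]
  rw [key]
  refine Submodule.sum_mem _ fun p hp => Submodule.smul_mem _ _ (subset_span ?_)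
  refine ⟨fun t => p t, fun t => hsupp t ?_, rfl⟩
  exact Fintype.mem_piFinset.mp hp t


def Pairs (m : ℕ) : Finset (ℕ × ℕ) :=
  (Finset.range (m+1)).biUnion fun lam => (hierIndex lam).image fun j => (lam, j)

lemma mem_Pairs {m : ℕ} {q : ℕ × ℕ} :
    q ∈ Pairs m ↔ q.1 ≤ m ∧ q.2 ∈ hierIndex q.1 := by
  simp only [Pairs, Finset.mem_biUnion, Finset.mem_range, Finset.mem_image]
  constructor
  · rintro ⟨lam, hlam, j, hj, rfl⟩
    exact ⟨Nat.lt_succ_iff.mp hlam, hj⟩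
  · rintro ⟨h1, h2⟩
    exact ⟨q.1, Nat.lt_succ_iff.mpr h1, q.2, h2, rfl⟩

lemma zero_mem_hierIndex : (0 : ℕ) ∈ hierIndex 0 := by simp [hierIndex]

section
variable (φ φhft : ℕ → ℕ → Set.Icc (0:ℝ) 1 → ℝ)

/-- evaluation linear map at the grid points of `Pairs m` -/
noncomputable def evalMap (m : ℕ) :
    (Set.Icc (0:ℝ) 1 → ℝ) →ₗ[ℝ] (↥(Pairs m) → ℝ) where
  toFun f := fun q => f (gridPt q.val.1 q.val.2)
  map_add' f g := rfl
  map_smul' c f := rfl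

lemma hft_li (m : ℕ)
    (hfund : ∀ lam lam' : ℕ, lam ≤ lam' → ∀ j ∈ hierIndex lam, ∀ j' ∈ hierIndex lam',
      φhft lam' j' (gridPt lam j) = if (lam, j) = (lam', j') then (1:ℝ) else 0) :
    LinearIndependent ℝ (fun q : ↥(Pairs m) => φhft q.val.1 q.val.2) := by
  apply LinearIndependent.of_comp (evalMap m)
  rw [Fintype.linearIndependent_iff]
  intro g h
  have main : ∀ L : ℕ, ∀ q₀ : ↥(Pairs m), q₀.val.1 = L → g q₀ = 0 := by
    intro L
    induction L using Nat.strong_induction_on with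
    | _ L ih =>
      intro q₀ hq₀
      have hq₀m := mem_Pairs.mp q₀.property
      have hx := congrFun h q₀
      rw [Finset.sum_apply] at hx
      have hterm : ∀ q : ↥(Pairs m), q ∈ Finset.univ →
          (g q • (evalMap m ∘ fun q : ↥(Pairs m) => φhft q.val.1 q.val.2) q) q₀
            = if q = q₀ then g q₀ else 0 := by
        intro q _
        have hqm := mem_Pairs.mp q.property
        simp only [Function.comp_apply, evalMap, LinearMap.coe_mk, AddHom.coe_mk,
          Pi.smul_apply, smul_eq_mul]
        by_cases hc : q = q₀
        · subst hc
          rw [hfund q.val.1 q.val.1 le_rfl q.val.2 hqm.2 q.val.2 hqm.2]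
          simp
        · by_cases hlt : q.val.1 < L
          · rw [ih q.val.1 hlt q rfl]
            simp [hc]
          · have hle : q₀.val.1 ≤ q.val.1 := by omega
            rw [hfund q₀.val.1 q.val.1 hle q₀.val.2 hq₀m.2 q.val.2 hqm.2]
            have : ¬ (q₀.val.1, q₀.val.2) = (q.val.1, q.val.2) := by
              intro hcon
              exact hc (Subtype.ext (Prod.ext (congrArg Prod.fst hcon).symm
                (congrArg Prod.snd hcon).symm))
            simp [this, hc]
      rw [Finset.sum_congr rfl hterm] at hx
      simpa using hx
  exact fun q => main q.val.1 q rfl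
end

section
variable (φ : ℕ → ℕ → Set.Icc (0:ℝ) 1 → ℝ)

/-- tensoring with φ 0 0 in the other coordinates, as a linear map -/
noncomputable def tensorMap (d : ℕ) (t0 : Fin d) :
    (Set.Icc (0:ℝ) 1 → ℝ) →ₗ[ℝ] ((Fin d → Set.Icc (0:ℝ) 1) → ℝ) where
  toFun f := fun x => f (x t0) * ∏ t ∈ Finset.univ.erase t0, φ 0 0 (x t)
  map_add' f g := by funext x; simp [add_mul]
  map_smul' c f := by funext x; simp [mul_assoc]

lemma phi_li (d n m : ℕ) (hd : 1 ≤ d) (hmn : m ≤ n)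
    (hli : LinearIndependent ℝ (fun pr : SGPairs d n =>
      fun x : Fin d → Set.Icc (0:ℝ) 1 => ∏ t, φ (pr.1.1 t) (pr.1.2 t) (x t))) :
    LinearIndependent ℝ (fun q : ↥(Pairs m) => φ q.val.1 q.val.2) := by
  set t0 : Fin d := ⟨0, hd⟩ with ht0
  have hsum : ∀ a : ℕ, (∑ t : Fin d, if t = t0 then a else 0) = a := by
    intro a; simp [Finset.sum_ite_eq']
  let e : ↥(Pairs m) → SGPairs d n := fun q =>
    ⟨(fun t => if t = t0 then q.val.1 else 0, fun t => if t = t0 then q.val.2 else 0),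
      by
        constructor
        · rw [hsum]; exact le_trans (mem_Pairs.mp q.property).1 hmn
        · intro t
          by_cases h : t = t0
          · simp [h, (mem_Pairs.mp q.property).2]
          · simp [h, zero_mem_hierIndex]⟩
  have he : Function.Injective e := by
    intro q q' h
    have h1 := congrFun (congrArg (Prod.fst ∘ Subtype.val) h) t0
    have h2 := congrFun (congrArg (Prod.snd ∘ Subtype.val) h) t0
    simp only [Function.comp_apply, if_pos rfl] at h1 h2
    exact Subtype.ext (Prod.ext h1 h2)
  have hcomp : (fun q : ↥(Pairs m) =>
      fun x : Fin d → Set.Icc (0:ℝ) 1 => ∏ t, φ ((e q).1.1 t) ((e q).1.2 t) (x t))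
      = (tensorMap φ d t0) ∘ (fun q : ↥(Pairs m) => φ q.val.1 q.val.2) := by
    funext q
    funext x
    simp only [Function.comp_apply, tensorMap, LinearMap.coe_mk, AddHom.coe_mk]
    rw [← Finset.mul_prod_erase Finset.univ _ (Finset.mem_univ t0)]
    simp only [e, if_pos rfl]
    congr 1
    refine Finset.prod_congr rfl fun t ht => ?_
    rw [if_neg (Finset.ne_of_mem_erase ht), if_neg (Finset.ne_of_mem_erase ht)]
  exact LinearIndependent.of_comp (tensorMap φ d t0) (hcomp ▸ hli.comp e he)
end

section
variable (φ φhft : ℕ → ℕ → Set.Icc (0:ℝ) 1 → ℝ)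

lemma oneD_span (d n m : ℕ) (hd : 1 ≤ d) (hmn : m ≤ n)
    (hmem : ∀ lam' : ℕ, ∀ j' ∈ hierIndex lam',
      φhft lam' j' ∈ Submodule.span ℝ
        (Set.range fun q : {q : ℕ × ℕ // q.1 ≤ lam' ∧ q.2 ∈ hierIndex q.1} =>
          φ q.1.1 q.1.2))
    (hfund : ∀ lam lam' : ℕ, lam ≤ lam' → ∀ j ∈ hierIndex lam, ∀ j' ∈ hierIndex lam',
      φhft lam' j' (gridPt lam j) = if (lam, j) = (lam', j') then (1:ℝ) else 0)
    (hli : LinearIndependent ℝ (fun pr : SGPairs d n =>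
      fun x : Fin d → Set.Icc (0:ℝ) 1 => ∏ t, φ (pr.1.1 t) (pr.1.2 t) (x t))) :
    ∀ lam ≤ m, ∀ j ∈ hierIndex lam,
      φ lam j ∈ span ℝ {f : Set.Icc (0:ℝ) 1 → ℝ |
        ∃ lam' j', lam' ≤ m ∧ j' ∈ hierIndex lam' ∧ f = φhft lam' j'} := by
  set V := span ℝ (Set.range fun q : ↥(Pairs m) => φ q.val.1 q.val.2) with hV
  set W := span ℝ (Set.range fun q : ↥(Pairs m) => φhft q.val.1 q.val.2) with hW
  have hliφ := phi_li φ d n m hd hmn hli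
  have hliψ := hft_li φhft m hfund
  have hWV : W ≤ V := by
    rw [hW, span_le]
    rintro f ⟨q, rfl⟩
    have hq := mem_Pairs.mp q.property
    refine SetLike.le_def.mp (span_le.mpr ?_) (hmem q.val.1 q.val.2 hq.2)
    rintro f ⟨q', rfl⟩
    exact subset_span ⟨⟨q'.val, mem_Pairs.mpr ⟨le_trans q'.property.1 hq.1, q'.property.2⟩⟩, rfl⟩
  haveI : FiniteDimensional ℝ V := FiniteDimensional.span_of_finite ℝ (Set.finite_range _)
  have heq : W = V := by
    apply Submodule.eq_of_le_of_finrank_le hWV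
    rw [hV, hW, finrank_span_eq_card hliφ, finrank_span_eq_card hliψ]
  intro lam hlam j hj
  have h1 : φ lam j ∈ V := subset_span ⟨⟨(lam, j), mem_Pairs.mpr ⟨hlam, hj⟩⟩, rfl⟩
  rw [← heq] at h1
  refine SetLike.le_def.mp (span_le.mpr ?_) h1
  rintro f ⟨q, rfl⟩
  have hq := mem_Pairs.mp q.property
  exact subset_span ⟨q.val.1, q.val.2, hq.1, hq.2, rfl⟩
end

lemma tensor_mem (d n : ℕ) (ψ χ : ℕ → ℕ → Set.Icc (0:ℝ) 1 → ℝ) (pr : SGPairs d n)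
    (h : ∀ t, χ (pr.val.1 t) (pr.val.2 t) ∈ span ℝ {f : Set.Icc (0:ℝ) 1 → ℝ |
        ∃ lam' j', lam' ≤ pr.val.1 t ∧ j' ∈ hierIndex lam' ∧ f = ψ lam' j'}) :
    (fun x : Fin d → Set.Icc (0:ℝ) 1 => ∏ t, χ (pr.val.1 t) (pr.val.2 t) (x t)) ∈
      span ℝ (Set.range fun pr' : SGPairs d n =>
        fun x : Fin d → Set.Icc (0:ℝ) 1 => ∏ t, ψ (pr'.val.1 t) (pr'.val.2 t) (x t)) := by
  have hmain := prod_mem_span' (fun t => χ (pr.val.1 t) (pr.val.2 t)) _ h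
  refine SetLike.le_def.mp (span_le.mpr ?_) hmain
  rintro F ⟨f, hf, rfl⟩
  choose lam jj h1 h2 h3 using hf
  have hsum : (∑ t, lam t) ≤ n :=
    le_trans (Finset.sum_le_sum fun t _ => h1 t) pr.property.1
  refine subset_span ⟨⟨(lam, jj), hsum, h2⟩, ?_⟩
  funext x
  exact Finset.prod_congr rfl fun t _ => by rw [h3 t]

/-- **Proposition 4.15 (spanned sparse grid space for the HFT).** -/
theorem hft_spanned_sparse_grid_space
    (d n : ℕ) (hd : 1 ≤ d)
    (φ φhft : ℕ → ℕ → Set.Icc (0:ℝ) 1 → ℝ)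
    (hmem : ∀ lam' : ℕ, ∀ j' ∈ hierIndex lam',
      φhft lam' j' ∈ Submodule.span ℝ
        (Set.range fun q : {q : ℕ × ℕ // q.1 ≤ lam' ∧ q.2 ∈ hierIndex q.1} =>
          φ q.1.1 q.1.2))
    (hfund : ∀ lam lam' : ℕ, lam ≤ lam' → ∀ j ∈ hierIndex lam, ∀ j' ∈ hierIndex lam',
      φhft lam' j' (gridPt lam j) = if (lam, j) = (lam', j') then (1:ℝ) else 0)
    (hli : LinearIndependent ℝ (fun pr : SGPairs d n =>
      fun x : Fin d → Set.Icc (0:ℝ) 1 => ∏ t, φ (pr.1.1 t) (pr.1.2 t) (x t))) :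
    Submodule.span ℝ (Set.range fun pr : SGPairs d n =>
        fun x : Fin d → Set.Icc (0:ℝ) 1 => ∏ t, φhft (pr.1.1 t) (pr.1.2 t) (x t))
    = Submodule.span ℝ (Set.range fun pr : SGPairs d n =>
        fun x : Fin d → Set.Icc (0:ℝ) 1 => ∏ t, φ (pr.1.1 t) (pr.1.2 t) (x t)) := by
  apply le_antisymm
  · rw [span_le]
    rintro F ⟨pr, rfl⟩
    refine tensor_mem d n φ φhft pr fun t => ?_
    refine SetLike.le_def.mp (span_le.mpr ?_) (hmem (pr.val.1 t) (pr.val.2 t) (pr.property.2 t))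
    rintro f ⟨q, rfl⟩
    exact subset_span ⟨q.val.1, q.val.2, q.property.1, q.property.2, rfl⟩
  · rw [span_le]
    rintro F ⟨pr, rfl⟩
    refine tensor_mem d n φhft φ pr fun t => ?_
    have hbound : pr.val.1 t ≤ n :=
      le_trans (Finset.single_le_sum (f := pr.val.1) (fun _ _ => Nat.zero_le _)
        (Finset.mem_univ t)) pr.property.1
    exact oneD_span φ φhft d n (pr.val.1 t) hd hbound hmem hfund hli
      (pr.val.1 t) le_rfl (pr.val.2 t) (pr.property.2 t)
end

section
/- Let k', k'' ∈ K, let (t_1,…,t_j) be a tuple of pairwise distinct dimensions with 0 ≤ j ≤ d, and suppose the matrix entry (L^{(t_1,…,t_j)})_{k'',k'} is nonzero. Then the grid K contains the chain from k' to k'' with respect to (t_1,…,t_j). (Lemma 4.22, sufficient condition for chain existence.) -/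
/-- The `j'`-th point of the chain from `k'` to `k''` with respect to the dimensions
`ts 0, …, ts (j−1)`: it agrees with `k''` in the dimensions `ts s` for `s < j'` and with
`k'` elsewhere. -/
def chainPt {d j : ℕ} (ts : Fin j → Fin d) (k' k'' : Fin d → ℕ) (j' : ℕ) :
    Fin d → ℕ :=
  fun t => if ∃ s : Fin j, (s : ℕ) < j' ∧ ts s = t then k'' t else k' t

/-- The grid `K` contains the chain from `k'` to `k''` with respect to `ts`. -/
def containsChain {d : ℕ} (K : Finset (Fin d → ℕ)) {j : ℕ} (ts : Fin j → Fin d)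
    (k' k'' : Fin d → ℕ) : Prop :=
  chainPt ts k' k'' j = k'' ∧ ∀ j' ≤ j, chainPt ts k' k'' j' ∈ K

/-- The product `L^{(t_1,…,t_j)} = L^{(t_j)} ⋯ L^{(t_1)}` of one-dimensional operators. -/
noncomputable def prodMat {d : ℕ} (K : Finset (Fin d → ℕ))
    (L : Fin d → Matrix (↥K) (↥K) ℝ) {j : ℕ} (ts : Fin j → Fin d) :
    Matrix (↥K) (↥K) ℝ :=
  ((List.ofFn fun s : Fin j => L (ts s)).reverse).prod

/-- **Lemma 4.22 (sufficient condition for chain existence).** -/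
theorem chain_existence_sufficient
    (d : ℕ) (hd : 1 ≤ d) (K : Finset (Fin d → ℕ))
    (L : Fin d → Matrix (↥K) (↥K) ℝ)
    (hL : ∀ t : Fin d, ∀ k' k'' : ↥K,
      ¬(∀ s : Fin d, s ≠ t → (k' : Fin d → ℕ) s = (k'' : Fin d → ℕ) s) →
      L t k'' k' = 0)
    (j : ℕ) (hj : j ≤ d) (ts : Fin j → Fin d) (hts : Function.Injective ts)
    (k' k'' : ↥K)
    (hne : prodMat K L ts k'' k' ≠ 0) :
    containsChain K ts (k' : Fin d → ℕ) (k'' : Fin d → ℕ) := by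
  clear hd
  induction j generalizing k'' with
  | zero =>
    have h1 : prodMat K L ts = 1 := by simp [prodMat]
    rw [h1] at hne
    have hkk : k'' = k' := by
      by_contra h
      simp [Matrix.one_apply, h] at hne
    subst hkk
    refine ⟨funext fun t => by simp [chainPt], fun j' _ => ?_⟩
    have h2 : chainPt ts (↑k'') (↑k'') j' = ((↑k'' : Fin d → ℕ)) := by
      funext t; simp [chainPt]
    rw [h2]; exact k''.2
  | succ n IH =>
    set ts' : Fin n → Fin d := fun s => ts s.castSucc with hts'def
    have hdec : prodMat K L ts = L (ts (Fin.last n)) * prodMat K L ts' := by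
      simp only [prodMat, List.ofFn_succ', List.concat_eq_append, List.reverse_append,
        List.reverse_singleton, List.singleton_append, List.prod_cons, hts'def]
    rw [hdec] at hne
    have hex : ∃ m : ↥K,
        L (ts (Fin.last n)) k'' m * prodMat K L ts' m k' ≠ 0 := by
      by_contra h
      push_neg at h
      exact hne (by simp only [Matrix.mul_apply]; exact Finset.sum_eq_zero fun m _ => h m)
    obtain ⟨m, hm⟩ := hex
    have hA : L (ts (Fin.last n)) k'' m ≠ 0 := left_ne_zero_of_mul hm
    have hB : prodMat K L ts' m k' ≠ 0 := right_ne_zero_of_mul hm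
    have hagree : ∀ s : Fin d, s ≠ ts (Fin.last n) →
        (m : Fin d → ℕ) s = (k'' : Fin d → ℕ) s := by
      by_contra h
      push_neg at h
      exact hA (hL _ m k'' (by push_neg; exact h))
    have hts'inj : Function.Injective ts' := fun a b hab =>
      Fin.castSucc_injective _ (hts hab)
    obtain ⟨hcm, hmem⟩ := IH (Nat.le_of_succ_le hj) ts' hts'inj m hB
    have key : ∀ j' ≤ n, chainPt ts (↑k') (↑k'') j' = chainPt ts' (↑k') (↑m) j' := by
      intro j' hj'
      funext t
      simp only [chainPt]
      by_cases h2 : ∃ s : Fin n, (s : ℕ) < j' ∧ ts' s = t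
      · obtain ⟨s, hs1, hs2⟩ := h2
        have h1 : ∃ s : Fin (n+1), (s : ℕ) < j' ∧ ts s = t :=
          ⟨s.castSucc, by simpa using hs1, hs2⟩
        rw [if_pos h1, if_pos ⟨s, hs1, hs2⟩]
        have ht : t ≠ ts (Fin.last n) := by
          rw [← hs2]
          intro h
          have := hts h
          have := congrArg Fin.val this
          simp at this
          omega
        exact (hagree t ht).symm
      · have h1 : ¬∃ s : Fin (n+1), (s : ℕ) < j' ∧ ts s = t := by
          rintro ⟨s, hs1, hs2⟩
          refine h2 ⟨⟨(s : ℕ), lt_of_lt_of_le hs1 hj'⟩, hs1, ?_⟩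
          have : (Fin.castSucc ⟨(s : ℕ), lt_of_lt_of_le hs1 hj'⟩ : Fin (n+1)) = s :=
            Fin.ext rfl
          rw [hts'def]; simpa [this]
        rw [if_neg h1, if_neg h2]
    have hlast : chainPt ts (↑k') (↑k'') (n+1) = (↑k'' : Fin d → ℕ) := by
      funext t
      simp only [chainPt]
      by_cases h : ∃ s : Fin (n+1), ts s = t
      · rw [if_pos (by obtain ⟨s, hs⟩ := h; exact ⟨s, s.isLt, hs⟩)]
      · rw [if_neg (by rintro ⟨s, _, hs⟩; exact h ⟨s, hs⟩)]
        have ht : t ≠ ts (Fin.last n) := fun hh => h ⟨Fin.last n, hh.symm⟩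
        have hnots' : ¬∃ s : Fin n, (s : ℕ) < n ∧ ts' s = t := by
          rintro ⟨s, _, hs⟩; exact h ⟨s.castSucc, hs⟩
        have := congrFun hcm t
        simp only [chainPt, if_neg hnots'] at this
        rw [this]
        exact hagree t ht
    refine ⟨hlast, ?_⟩
    intro j' hj'
    rcases Nat.lt_or_ge j' (n+1) with h | h
    · rw [key j' (Nat.lt_succ_iff.mp h)]
      exact hmem j' (Nat.lt_succ_iff.mp h)
    · have : j' = n + 1 := le_antisymm hj' h
      rw [this, hlast]
      exact k''.2
end

section
/- Let k', k'' ∈ K, let (t_1,…,t_j) be a tuple of pairwise distinct dimensions with 0 ≤ j ≤ d, and suppose the grid K contains the chain (k^{(0)},…,k^{(j)}) from k' to k'' with respect to (t_1,…,t_j). Then (L^{(t_1,…,t_j)})_{k^{(j)},k'} = ∏_{s=1}^{j} (L^{(t_s)})_{k^{(s)},k^{(s−1)}}. (Lemma 4.23, necessary condition for chain existence.) -/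
lemma prodMat_zero {d : ℕ} (K : Finset (Fin d → ℕ)) (L : Fin d → Matrix (↥K) (↥K) ℝ)
    (ts : Fin 0 → Fin d) : prodMat K L ts = 1 := by
  simp [prodMat]

lemma prodMat_succ {d j : ℕ} (K : Finset (Fin d → ℕ)) (L : Fin d → Matrix (↥K) (↥K) ℝ)
    (ts : Fin (j+1) → Fin d) :
    prodMat K L ts = prodMat K L (ts ∘ Fin.succ) * L (ts 0) := by
  unfold prodMat
  rw [List.ofFn_succ, List.reverse_cons, List.prod_append, List.prod_cons, List.prod_nil,
    mul_one]
  rfl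

lemma chainPt_zero {d j : ℕ} (ts : Fin j → Fin d) (k' k'' : Fin d → ℕ) :
    chainPt ts k' k'' 0 = k' := by
  funext t
  simp [chainPt]

lemma exists_lt_one_iff {d j : ℕ} (ts : Fin (j+1) → Fin d) (t : Fin d) :
    (∃ s : Fin (j+1), (s : ℕ) < 1 ∧ ts s = t) ↔ ts 0 = t := by
  constructor
  · rintro ⟨s, hs, hst⟩
    have hs0 : s = 0 := Fin.ext (by simp only [Fin.val_zero]; omega)
    rwa [hs0] at hst
  · intro h; exact ⟨0, Nat.zero_lt_one, h⟩

lemma chainPt_one_apply {d j : ℕ} (ts : Fin (j+1) → Fin d) (k' k'' : Fin d → ℕ) (t : Fin d) :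
    chainPt ts k' k'' 1 t = if ts 0 = t then k'' t else k' t := by
  simp only [chainPt]
  exact if_congr (exists_lt_one_iff ts t) rfl rfl

lemma chainPt_shift {d j : ℕ} (ts : Fin (j+1) → Fin d) (k' k'' : Fin d → ℕ) (j' : ℕ) :
    chainPt (ts ∘ Fin.succ) (chainPt ts k' k'' 1) k'' j' = chainPt ts k' k'' (j'+1) := by
  funext t
  simp only [chainPt, Function.comp]
  by_cases hP : ∃ s : Fin j, (s : ℕ) < j' ∧ ts s.succ = t
  · rw [if_pos hP, if_pos ?_]
    obtain ⟨s, hs, hst⟩ := hP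
    exact ⟨s.succ, by simpa using Nat.succ_lt_succ hs, hst⟩
  · rw [if_neg hP]
    by_cases hR : ts 0 = t
    · rw [if_pos ((exists_lt_one_iff ts t).mpr hR),
        if_pos ⟨0, by simp only [Fin.val_zero]; omega, hR⟩]
    · rw [if_neg (fun h => hR ((exists_lt_one_iff ts t).mp h)), if_neg ?_]
      rintro ⟨s, hs, hst⟩
      rcases Fin.eq_zero_or_eq_succ s with h0 | ⟨s', rfl⟩
      · exact hR (by rwa [h0] at hst)
      · exact hP ⟨s', by simp only [Fin.val_succ] at hs; omega, hst⟩

lemma prodMat_eq_zero {d : ℕ} (K : Finset (Fin d → ℕ)) (L : Fin d → Matrix (↥K) (↥K) ℝ)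
    (hL : ∀ t : Fin d, ∀ k' k'' : ↥K,
      ¬(∀ s : Fin d, s ≠ t → (k' : Fin d → ℕ) s = (k'' : Fin d → ℕ) s) →
      L t k'' k' = 0)
    {j : ℕ} (ts : Fin j → Fin d) (k' k'' : ↥K) (t : Fin d)
    (ht : ∀ s, ts s ≠ t) (hne : (k'' : Fin d → ℕ) t ≠ (k' : Fin d → ℕ) t) :
    prodMat K L ts k'' k' = 0 := by
  induction j generalizing k' with
  | zero =>
      rw [prodMat_zero]
      exact Matrix.one_apply_ne (fun h => hne (by rw [h]))
  | succ j ih =>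
      rw [prodMat_succ, Matrix.mul_apply]
      apply Finset.sum_eq_zero
      intro p _
      by_cases hp : (p : Fin d → ℕ) t = (k' : Fin d → ℕ) t
      · have h1 : prodMat K L (ts ∘ Fin.succ) k'' p = 0 :=
          ih (ts ∘ Fin.succ) p (fun s => ht s.succ) (by rw [hp]; exact hne)
        rw [h1, zero_mul]
      · have h2 : L (ts 0) p k' = 0 := by
          apply hL
          intro hall
          exact hp ((hall t (fun h => ht 0 h.symm)).symm)
        rw [h2, mul_zero]


/-- **Lemma 4.23 (necessary condition for chain existence).** -/
theorem chain_existence_necessary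
    (d : ℕ) (hd : 1 ≤ d) (K : Finset (Fin d → ℕ))
    (L : Fin d → Matrix (↥K) (↥K) ℝ)
    (hL : ∀ t : Fin d, ∀ k' k'' : ↥K,
      ¬(∀ s : Fin d, s ≠ t → (k' : Fin d → ℕ) s = (k'' : Fin d → ℕ) s) →
      L t k'' k' = 0)
    (j : ℕ) (hj : j ≤ d) (ts : Fin j → Fin d) (hts : Function.Injective ts)
    (k' k'' : ↥K)
    (hchain : containsChain K ts (k' : Fin d → ℕ) (k'' : Fin d → ℕ)) :
    prodMat K L ts k'' k'
      = ∏ s : Fin j,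
          L (ts s)
            ⟨chainPt ts (k' : Fin d → ℕ) (k'' : Fin d → ℕ) ((s : ℕ) + 1),
              hchain.2 ((s : ℕ) + 1) (Nat.succ_le_of_lt s.isLt)⟩
            ⟨chainPt ts (k' : Fin d → ℕ) (k'' : Fin d → ℕ) (s : ℕ),
              hchain.2 (s : ℕ) (le_of_lt s.isLt)⟩ := by
  clear hd
  induction j generalizing k' with
  | zero =>
      have h0 : (k'' : Fin d → ℕ) = (k' : Fin d → ℕ) := by
        rw [← hchain.1, chainPt_zero]
      rw [prodMat_zero]
      simp only [Finset.univ_eq_empty, Finset.prod_empty]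
      rw [show (k'' : ↥K) = k' from Subtype.ext h0, Matrix.one_apply_eq]
  | succ j ih =>
      have hp0K : chainPt ts (↑k') (↑k'') 1 ∈ K := hchain.2 1 (by omega)
      set P0 : ↥K := ⟨chainPt ts (↑k') (↑k'') 1, hp0K⟩ with hP0
      have hinj' : Function.Injective (ts ∘ Fin.succ) :=
        hts.comp (Fin.succ_injective j)
      have hchain' : containsChain K (ts ∘ Fin.succ) (P0 : Fin d → ℕ) (↑k'') := by
        constructor
        · show chainPt (ts ∘ Fin.succ) (chainPt ts (↑k') (↑k'') 1) (↑k'') j = ↑k''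
          rw [chainPt_shift]
          exact hchain.1
        · intro j' hj'
          show chainPt (ts ∘ Fin.succ) (chainPt ts (↑k') (↑k'') 1) (↑k'') j' ∈ K
          rw [chainPt_shift]
          exact hchain.2 (j'+1) (by omega)
      have hzero : ∀ q : ↥K, q ∈ Finset.univ → q ≠ P0 →
          prodMat K L (ts ∘ Fin.succ) k'' q * L (ts 0) q k' = 0 := by
        intro q _ hq
        by_cases hq1 : ∀ s : Fin d, s ≠ ts 0 →
            (k' : Fin d → ℕ) s = (q : Fin d → ℕ) s
        · have hqts : (q : Fin d → ℕ) (ts 0) ≠ (k'' : Fin d → ℕ) (ts 0) := by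
            intro heq
            apply hq
            apply Subtype.ext
            funext t
            show (q : Fin d → ℕ) t = chainPt ts (↑k') (↑k'') 1 t
            rw [chainPt_one_apply]
            by_cases hteq : ts 0 = t
            · rw [if_pos hteq, ← hteq]; exact heq
            · rw [if_neg hteq]
              exact (hq1 t (fun h => hteq h.symm)).symm
          have h1 : prodMat K L (ts ∘ Fin.succ) k'' q = 0 := by
            apply prodMat_eq_zero K L hL (ts ∘ Fin.succ) q k'' (ts 0)
            · intro s h
              exact Fin.succ_ne_zero s (hts h)
            · exact fun h => hqts (h.symm)
          rw [h1, zero_mul]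
        · rw [hL (ts 0) k' q hq1, mul_zero]
      rw [prodMat_succ, Matrix.mul_apply,
        Finset.sum_eq_single_of_mem P0 (Finset.mem_univ _) hzero,
        ih (by omega) (ts ∘ Fin.succ) hinj' P0 hchain',
        Fin.prod_univ_succ]
      rw [mul_comm]
      congr 1
      · refine congrArg₂ (L (ts 0)) ?_ ?_
        · exact Subtype.ext (by simp [hP0])
        · exact Subtype.ext (by simp [chainPt_zero])
      · refine Finset.prod_congr rfl fun s _ => ?_
        simp only [Function.comp_apply, Fin.val_succ]
        refine congrArg₂ (L (ts s.succ)) ?_ ?_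
        · exact Subtype.ext (chainPt_shift ts (↑k') (↑k'') ((s : ℕ) + 1))
        · exact Subtype.ext (chainPt_shift ts (↑k') (↑k'') (s : ℕ))
end

section
/- Let (t_1,…,t_d) be a permutation of (1,…,d) and let L be a real K×K matrix with tensor product structure: for all k', k'' ∈ K such that K contains the chain (k^{(0)},…,k^{(d)}) from k' to k'' with respect to (t_1,…,t_d), one has L_{k'',k'} = ∏_{s=1}^{d} (L^{(t_s)})_{k^{(s)},k^{(s−1)}}. Then the unidirectional principle is correct, i.e., L^{(t_1,…,t_d)} = L, if and only if for all k', k'' ∈ K with L_{k'',k'} ≠ 0, the grid K contains the chain from k' to k'' with respect to (t_1,…,t_d). (Proposition 4.24, characterization of the correctness of the unidirectional principle.) -/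
open scoped Classical

namespace UPAux

variable {d : ℕ}

lemma chainPt_zero (ts : Fin d → Fin d) (k' k'' : Fin d → ℕ) :
    chainPt ts k' k'' 0 = k' := by
  funext t; simp [chainPt]

lemma chainPt_congr (ts : Fin d → Fin d) (k' m₁ m₂ : Fin d → ℕ) (j' : ℕ)
    (h : ∀ s : Fin d, (s : ℕ) < j' → m₁ (ts s) = m₂ (ts s)) :
    chainPt ts k' m₁ j' = chainPt ts k' m₂ j' := by
  funext t
  unfold chainPt
  by_cases hx : ∃ s : Fin d, (s : ℕ) < j' ∧ ts s = t
  · obtain ⟨s, hs, rfl⟩ := hx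
    rw [if_pos ⟨s, hs, rfl⟩, if_pos ⟨s, hs, rfl⟩, h s hs]
  · rw [if_neg hx, if_neg hx]

/-- Auxiliary condition: `m` agrees with `k'` outside the dimensions `ts s`, `s < j`,
and the grid contains the first `j` chain points from `k'` to `m`. -/
def Cond (K : Finset (Fin d → ℕ)) (ts : Fin d → Fin d) (j : ℕ)
    (k' m : Fin d → ℕ) : Prop :=
  (∀ t, (¬∃ s : Fin d, (s : ℕ) < j ∧ ts s = t) → m t = k' t) ∧
  ∀ j' ≤ j, chainPt ts k' m j' ∈ K

/-- Chain point as an element of `K` (with junk value `k'` if not in `K`). -/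
noncomputable def cK (K : Finset (Fin d → ℕ)) (ts : Fin d → Fin d)
    (k' m : ↥K) (j' : ℕ) : ↥K :=
  if h : chainPt ts (k' : Fin d → ℕ) (m : Fin d → ℕ) j' ∈ K then ⟨_, h⟩ else k'

noncomputable def Qmat (K : Finset (Fin d → ℕ)) (L : Fin d → Matrix (↥K) (↥K) ℝ)
    (tsN : ℕ → Fin d) : ℕ → Matrix (↥K) (↥K) ℝ
  | 0 => 1
  | (j+1) => L (tsN j) * Qmat K L tsN j

lemma Qmat_eq_prod (K : Finset (Fin d → ℕ)) (L : Fin d → Matrix (↥K) (↥K) ℝ)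
    (tsN : ℕ → Fin d) (j : ℕ) :
    Qmat K L tsN j = ((List.ofFn fun s : Fin j => L (tsN s)).reverse).prod := by
  induction j with
  | zero => simp [Qmat]
  | succ j ih =>
      rw [Qmat, ih, List.ofFn_succ', List.concat_eq_append, List.reverse_append]
      simp

lemma key (K : Finset (Fin d → ℕ)) (L : Fin d → Matrix (↥K) (↥K) ℝ)
    (hL : ∀ t : Fin d, ∀ k' k'' : ↥K,
      ¬(∀ s : Fin d, s ≠ t → (k' : Fin d → ℕ) s = (k'' : Fin d → ℕ) s) →
      L t k'' k' = 0)
    (ts : Fin d → Fin d) (hinj : Function.Injective ts)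
    (tsN : ℕ → Fin d) (htsN : ∀ (n : ℕ) (h : n < d), tsN n = ts ⟨n, h⟩) :
    ∀ j, j ≤ d → ∀ k' m : ↥K,
      Qmat K L tsN j m k' =
        if Cond K ts j (k' : Fin d → ℕ) (m : Fin d → ℕ) then
          ∏ s ∈ Finset.range j, L (tsN s) (cK K ts k' m (s+1)) (cK K ts k' m s)
        else 0 := by
  intro j
  induction j with
  | zero =>
      intro _ k' m
      have h0 : Cond K ts 0 (k' : Fin d → ℕ) (m : Fin d → ℕ) ↔ m = k' := by
        constructor
        · intro h
          apply Subtype.ext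
          funext t
          exact h.1 t (by simp)
        · rintro rfl
          refine ⟨fun t _ => rfl, fun j' hj' => ?_⟩
          interval_cases j'
          rw [chainPt_zero]
          exact Subtype.coe_prop _
      rw [Qmat, Matrix.one_apply]
      by_cases h : m = k'
      · rw [if_pos h, if_pos (h0.mpr h)]
        simp
      · rw [if_neg h, if_neg (fun hc => h (h0.mp hc))]
  | succ j ih =>
      intro hj k' m
      have hjd : j < d := hj
      have htj : tsN j = ts ⟨j, hjd⟩ := htsN j hjd
      have hne_tj : ∀ s : Fin d, (s : ℕ) < j → ts s ≠ ts ⟨j, hjd⟩ := by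
        intro s hs he
        have : s = ⟨j, hjd⟩ := hinj he
        rw [this] at hs
        exact lt_irrefl j hs
      -- a nonzero L-entry forces agreement off ts ⟨j, hjd⟩
      have factA : ∀ n : ↥K, L (tsN j) m n ≠ 0 →
          ∀ s : Fin d, s ≠ ts ⟨j, hjd⟩ → (n : Fin d → ℕ) s = (m : Fin d → ℕ) s := by
        intro n hne s hs
        by_contra hc
        apply hne
        apply hL
        intro hall
        exact hc (hall s (htj ▸ hs))
      -- from Cond j for n and the step relation, n is the j-th chain point
      have factB : ∀ n : ↥K, Cond K ts j (k' : Fin d → ℕ) (n : Fin d → ℕ) →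
          (∀ s : Fin d, s ≠ ts ⟨j, hjd⟩ → (n : Fin d → ℕ) s = (m : Fin d → ℕ) s) →
          (n : Fin d → ℕ) = chainPt ts (k' : Fin d → ℕ) (m : Fin d → ℕ) j := by
        intro n hcn hstep
        funext t
        unfold chainPt
        by_cases hx : ∃ s : Fin d, (s : ℕ) < j ∧ ts s = t
        · rw [if_pos hx]
          obtain ⟨s, hs, rfl⟩ := hx
          exact hstep _ (hne_tj s hs)
        · rw [if_neg hx]
          exact hcn.1 t hx
      -- chain points up to j from k' to n coincide with those from k' to m
      have factC : ∀ n : ↥K, Cond K ts j (k' : Fin d → ℕ) (n : Fin d → ℕ) →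
          (∀ s : Fin d, s ≠ ts ⟨j, hjd⟩ → (n : Fin d → ℕ) s = (m : Fin d → ℕ) s) →
          ∀ j' ≤ j, chainPt ts (k' : Fin d → ℕ) (m : Fin d → ℕ) j'
            = chainPt ts (k' : Fin d → ℕ) (n : Fin d → ℕ) j' := by
        intro n hcn hstep j' hj'
        apply chainPt_congr
        intro s hs
        exact (hstep (ts s) (hne_tj s (lt_of_lt_of_le hs hj'))).symm
      -- if Cond j holds for n and the step relation holds, Cond (j+1) holds for m
      have condSucc : ∀ n : ↥K, Cond K ts j (k' : Fin d → ℕ) (n : Fin d → ℕ) →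
          (∀ s : Fin d, s ≠ ts ⟨j, hjd⟩ → (n : Fin d → ℕ) s = (m : Fin d → ℕ) s) →
          Cond K ts (j+1) (k' : Fin d → ℕ) (m : Fin d → ℕ) := by
        intro n hcn hstep
        have hnotj : ∀ t, (¬∃ s : Fin d, (s : ℕ) < j + 1 ∧ ts s = t) →
            (¬∃ s : Fin d, (s : ℕ) < j ∧ ts s = t) ∧ t ≠ ts ⟨j, hjd⟩ := by
          intro t ht
          constructor
          · rintro ⟨s, hs, rfl⟩
            exact ht ⟨s, by omega, rfl⟩
          · rintro rfl
            exact ht ⟨⟨j, hjd⟩, by simp, rfl⟩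
        have hchsucc : chainPt ts (k' : Fin d → ℕ) (m : Fin d → ℕ) (j+1)
            = (m : Fin d → ℕ) := by
          funext t
          unfold chainPt
          by_cases hx : ∃ s : Fin d, (s : ℕ) < j + 1 ∧ ts s = t
          · rw [if_pos hx]
          · rw [if_neg hx]
            obtain ⟨hx1, hx2⟩ := hnotj t hx
            rw [← hcn.1 t hx1]
            exact hstep t (fun he => hx2 he)
        refine ⟨?_, ?_⟩
        · intro t ht
          obtain ⟨hx1, hx2⟩ := hnotj t ht
          rw [← hstep t (fun he => hx2 he)]
          exact hcn.1 t hx1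
        · intro j' hj'
          rcases Nat.lt_or_ge j' (j+1) with h' | h'
          · have hle : j' ≤ j := by omega
            rw [factC n hcn hstep j' hle]
            exact hcn.2 j' hle
          · have : j' = j + 1 := by omega
            rw [this, hchsucc]
            exact m.2
      rw [Qmat, Matrix.mul_apply]
      simp only [ih (Nat.le_of_succ_le hj)]
      by_cases hC : Cond K ts (j+1) (k' : Fin d → ℕ) (m : Fin d → ℕ)
      · rw [if_pos hC]
        have hmemj : chainPt ts (k' : Fin d → ℕ) (m : Fin d → ℕ) j ∈ K :=
          hC.2 j (by omega)
        set n₀ : ↥K := ⟨chainPt ts (k' : Fin d → ℕ) (m : Fin d → ℕ) j, hmemj⟩ with hn₀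
        -- Cond j holds for n₀
        have hcn₀ : Cond K ts j (k' : Fin d → ℕ) (n₀ : Fin d → ℕ) := by
          constructor
          · intro t ht
            show chainPt ts (k' : Fin d → ℕ) (m : Fin d → ℕ) j t = _
            unfold chainPt
            rw [if_neg ht]
          · intro j' hj'
            have : chainPt ts (k' : Fin d → ℕ) (n₀ : Fin d → ℕ) j'
                = chainPt ts (k' : Fin d → ℕ) (m : Fin d → ℕ) j' := by
              apply chainPt_congr
              intro s hs
              show chainPt ts (k' : Fin d → ℕ) (m : Fin d → ℕ) j (ts s) = _
              unfold chainPt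
              rw [if_pos ⟨s, lt_of_lt_of_le hs hj', rfl⟩]
            rw [this]
            exact hC.2 j' (by omega)
        have hch : ∀ j' ≤ j, chainPt ts (k' : Fin d → ℕ) (n₀ : Fin d → ℕ) j'
            = chainPt ts (k' : Fin d → ℕ) (m : Fin d → ℕ) j' := by
          intro j' hj'
          apply chainPt_congr
          intro s hs
          show chainPt ts (k' : Fin d → ℕ) (m : Fin d → ℕ) j (ts s) = _
          unfold chainPt
          rw [if_pos ⟨s, lt_of_lt_of_le hs hj', rfl⟩]
        rw [Finset.sum_eq_single n₀]
        · rw [if_pos hcn₀]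
          have hcKeq : ∀ j' ≤ j, cK K ts k' n₀ j' = cK K ts k' m j' := by
            intro j' hj'
            unfold cK
            apply Subtype.ext
            rcases Finset.decidableMem (chainPt ts (k' : Fin d → ℕ)
                (m : Fin d → ℕ) j') K with hmem | hmem
            · rw [dif_neg (by rw [hch j' hj']; exact hmem), dif_neg hmem]
            · rw [dif_pos (by rw [hch j' hj']; exact hmem), dif_pos hmem]
              exact hch j' hj'
          have hprodeq : (∏ s ∈ Finset.range j,
                L (tsN s) (cK K ts k' n₀ (s+1)) (cK K ts k' n₀ s))
              = ∏ s ∈ Finset.range j,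
                L (tsN s) (cK K ts k' m (s+1)) (cK K ts k' m s) := by
            apply Finset.prod_congr rfl
            intro s hs
            have hs' : s < j := Finset.mem_range.mp hs
            rw [hcKeq (s+1) (by omega), hcKeq s (by omega)]
          rw [hprodeq, Finset.prod_range_succ]
          have hcKj : cK K ts k' m j = n₀ := by
            unfold cK
            rw [dif_pos hmemj]
          have hmemj1 : chainPt ts (k' : Fin d → ℕ) (m : Fin d → ℕ) (j+1) ∈ K :=
            hC.2 (j+1) le_rfl
          have hchsucc : chainPt ts (k' : Fin d → ℕ) (m : Fin d → ℕ) (j+1)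
              = (m : Fin d → ℕ) := by
            funext t
            unfold chainPt
            by_cases hx : ∃ s : Fin d, (s : ℕ) < j + 1 ∧ ts s = t
            · rw [if_pos hx]
            · rw [if_neg hx]
              exact (hC.1 t hx).symm
          have hcKj1 : cK K ts k' m (j+1) = m := by
            unfold cK
            rw [dif_pos hmemj1]
            exact Subtype.ext hchsucc
          rw [hcKj, hcKj1, mul_comm]
        · intro n _ hnne
          by_cases hcn : Cond K ts j (k' : Fin d → ℕ) (n : Fin d → ℕ)
          · rw [if_pos hcn]
            have hL0 : L (tsN j) m n = 0 := by
              by_contra hne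
              apply hnne
              apply Subtype.ext
              rw [factB n hcn (factA n hne)]
            rw [hL0, zero_mul]
          · rw [if_neg hcn, mul_zero]
        · intro hn
          exact absurd (Finset.mem_univ n₀) hn
      · rw [if_neg hC]
        apply Finset.sum_eq_zero
        intro n _
        by_cases hcn : Cond K ts j (k' : Fin d → ℕ) (n : Fin d → ℕ)
        · rw [if_pos hcn]
          have hL0 : L (tsN j) m n = 0 := by
            by_contra hne
            exact hC (condSucc n hcn (factA n hne))
          rw [hL0, zero_mul]
        · rw [if_neg hcn, mul_zero]

end UPAux

open UPAux in
/-- **Proposition 4.24 (characterization of the correctness of the unidirectional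
principle).** -/
theorem unidirectional_principle_correctness
    (d : ℕ) (hd : 1 ≤ d) (K : Finset (Fin d → ℕ))
    (L : Fin d → Matrix (↥K) (↥K) ℝ)
    (hL : ∀ t : Fin d, ∀ k' k'' : ↥K,
      ¬(∀ s : Fin d, s ≠ t → (k' : Fin d → ℕ) s = (k'' : Fin d → ℕ) s) →
      L t k'' k' = 0)
    (ts : Fin d → Fin d) (hts : Function.Bijective ts)
    (M : Matrix (↥K) (↥K) ℝ)
    (htens : ∀ k' k'' : ↥K,
      ∀ h : containsChain K ts (k' : Fin d → ℕ) (k'' : Fin d → ℕ),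
      M k'' k' = ∏ s : Fin d,
        L (ts s)
          ⟨chainPt ts (k' : Fin d → ℕ) (k'' : Fin d → ℕ) ((s : ℕ) + 1),
            h.2 ((s : ℕ) + 1) (Nat.succ_le_of_lt s.isLt)⟩
          ⟨chainPt ts (k' : Fin d → ℕ) (k'' : Fin d → ℕ) (s : ℕ),
            h.2 (s : ℕ) (le_of_lt s.isLt)⟩) :
    prodMat K L ts = M ↔
      ∀ k' k'' : ↥K, M k'' k' ≠ 0 →
        containsChain K ts (k' : Fin d → ℕ) (k'' : Fin d → ℕ) := by
  classical
  have hd0 : 0 < d := hd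
  set tsN : ℕ → Fin d := fun n => if h : n < d then ts ⟨n, h⟩ else ts ⟨0, hd0⟩
    with htsNdef
  have htsN : ∀ (n : ℕ) (h : n < d), tsN n = ts ⟨n, h⟩ := by
    intro n h
    simp [htsNdef, dif_pos h]
  have hprod : prodMat K L ts = Qmat K L tsN d := by
    have hfun : (fun s : Fin d => L (tsN ↑s)) = fun s : Fin d => L (ts s) :=
      funext fun s => by rw [htsN _ s.isLt]
    rw [Qmat_eq_prod, hfun]
    rfl
  have hkey := key K L hL ts hts.1 tsN htsN d le_rfl
  -- Cond at level d is equivalent to containsChain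
  have cond_to_chain : ∀ k' k'' : ↥K,
      Cond K ts d (k' : Fin d → ℕ) (k'' : Fin d → ℕ) →
      containsChain K ts (k' : Fin d → ℕ) (k'' : Fin d → ℕ) := by
    intro k' k'' hC
    refine ⟨?_, hC.2⟩
    funext t
    obtain ⟨s, hs⟩ := hts.2 t
    show chainPt ts _ _ d t = _
    unfold chainPt
    rw [if_pos ⟨s, s.isLt, hs⟩]
  have chain_to_cond : ∀ k' k'' : ↥K,
      containsChain K ts (k' : Fin d → ℕ) (k'' : Fin d → ℕ) →
      Cond K ts d (k' : Fin d → ℕ) (k'' : Fin d → ℕ) := by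
    intro k' k'' h
    refine ⟨?_, h.2⟩
    intro t ht
    obtain ⟨s, hs⟩ := hts.2 t
    exact absurd ⟨s, s.isLt, hs⟩ ht
  constructor
  · intro heq k' k'' hM
    have hQ : Qmat K L tsN d k'' k' = M k'' k' := by
      rw [← hprod, heq]
    rw [hkey k' k''] at hQ
    by_cases hC : Cond K ts d (k' : Fin d → ℕ) (k'' : Fin d → ℕ)
    · exact cond_to_chain k' k'' hC
    · rw [if_neg hC] at hQ
      exact absurd hQ.symm hM
  · intro hyp
    rw [hprod]
    ext k'' k'
    rw [hkey k' k'']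
    by_cases hC : Cond K ts d (k' : Fin d → ℕ) (k'' : Fin d → ℕ)
    · rw [if_pos hC]
      have hcc := cond_to_chain k' k'' hC
      rw [htens k' k'' hcc]
      rw [← Fin.prod_univ_eq_prod_range
        (fun s => L (tsN s) (cK K ts k' k'' (s+1)) (cK K ts k' k'' s)) d]
      apply Finset.prod_congr rfl
      intro s _
      have h1 : tsN (s : ℕ) = ts s := by rw [htsN (s : ℕ) s.isLt]
      have h2 : cK K ts k' k'' ((s : ℕ) + 1)
          = ⟨chainPt ts (k' : Fin d → ℕ) (k'' : Fin d → ℕ) ((s : ℕ) + 1),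
              hcc.2 _ (Nat.succ_le_of_lt s.isLt)⟩ := by
        unfold cK
        rw [dif_pos (hcc.2 _ (Nat.succ_le_of_lt s.isLt))]
      have h3 : cK K ts k' k'' (s : ℕ)
          = ⟨chainPt ts (k' : Fin d → ℕ) (k'' : Fin d → ℕ) (s : ℕ),
              hcc.2 _ (le_of_lt s.isLt)⟩ := by
        unfold cK
        rw [dif_pos (hcc.2 _ (le_of_lt s.isLt))]
      rw [h1, h2, h3]
    · rw [if_neg hC]
      by_contra hne
      have hM : M k'' k' ≠ 0 := fun h => hne h.symm
      exact hC (chain_to_cond k' k'' (hyp k' k'' hM))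
end
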